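/- The final stage of the 3D DRT of planes computes discrete plane sums: with N = 2^n and f : {0,...,N-1}³ → ℤ extended by zero, f^n(s₁, s₂, d) = Σ_{x=0}^{N-1} Σ_{y=0}^{N-1} f(x, y, L^n_{s₁}(x) + L^n_{s₂}(y) + d) for all slopes s₁, s₂ ∈ {0,...,N-1} and all displacements d, where L^n_s(k) applies the discrete line function to the binary digits of k. -/

import Mathlib

/-!
Write an index `u < 2^(m+1)` as `2^m b + u'` with `b` its top binary digit. The top digit of the
discrete line is weighted by `⌈s/2⌉` and the remaining weights are those of `⌊s/2⌋`, so
`L^{m+1}_s(2^m b + u') = b ⌈s/2⌉ + L^m_{⌊s/2⌋}(u')`. Hence the plane sums over the four blocks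
`(b₁, b₂)` obey the four-term recursion defining `drt3Stage` (with `⌈s/2⌉ = s % 2 + ⌊s/2⌋`), and
induction on the stage identifies stage `n` at block `0` with the full plane sum over `[0, 2^n)²`.
-/

open Finset

/-- Closed-form discrete line `l^n_s(u_0,...,u_{n-1})`. -/
def dline (n s : ℕ) (u : ℕ → ℕ) : ℕ :=
  ∑ i ∈ Finset.range n, u (n - 1 - i) * ((s / 2 ^ i + 1) / 2)

/-- `i`-th binary digit of `k` (least significant first). -/
def bit (k i : ℕ) : ℕ := k / 2 ^ i % 2

/-- Discrete line applied to the binary digits of `k`. -/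
def Lline (n s k : ℕ) : ℕ := dline n s (bit k)

/-- The iterative multiscale 3D DRT of planes: stage 0 reads the input, each stage applies
the four-term two-scale recursion, with slopes and block indices in decimal. -/
def drt3Stage (f : ℤ → ℤ → ℤ → ℤ) : ℕ → ℕ → ℕ → ℕ → ℕ → ℤ → ℤ
  | 0, _, v₁, _, v₂, d => f (v₁ : ℤ) (v₂ : ℤ) d
  | m + 1, s₁, v₁, s₂, v₂, d =>
      drt3Stage f m (s₁ / 2) (2 * v₁) (s₂ / 2) (2 * v₂) d +
      drt3Stage f m (s₁ / 2) (2 * v₁ + 1) (s₂ / 2) (2 * v₂)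
        (d + (s₁ % 2 : ℤ) + (s₁ / 2 : ℤ)) +
      drt3Stage f m (s₁ / 2) (2 * v₁) (s₂ / 2) (2 * v₂ + 1)
        (d + (s₂ % 2 : ℤ) + (s₂ / 2 : ℤ)) +
      drt3Stage f m (s₁ / 2) (2 * v₁ + 1) (s₂ / 2) (2 * v₂ + 1)
        (d + (s₁ % 2 : ℤ) + (s₁ / 2 : ℤ) + (s₂ % 2 : ℤ) + (s₂ / 2 : ℤ))


theorem dline_congr {m s : ℕ} {u u' : ℕ → ℕ} (h : ∀ i < m, u i = u' i) :
    dline m s u = dline m s u' :=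
  sum_congr rfl fun i hi => by rw [h _ (by simp at hi; omega)]

theorem dline_succ (m s : ℕ) (u : ℕ → ℕ) :
    dline (m + 1) s u = u m * ((s + 1) / 2) + dline m (s / 2) u := by
  unfold dline
  rw [sum_range_succ', add_comm]
  congr 1
  · simp
  · refine sum_congr rfl fun i _ => ?_
    rw [Nat.div_div_eq_div_mul, ← pow_succ']
    congr 2
    omega

theorem bit_two_pow_mul_add_of_lt {m j : ℕ} (b u : ℕ) (hj : j < m) :
    bit (2 ^ m * b + u) j = bit u j := by
  have h : 2 ^ m * b = 2 ^ j * (2 * (2 ^ (m - j - 1) * b)) := by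
    rw [← mul_assoc, ← mul_assoc, ← pow_succ, ← pow_add]
    congr 2
    omega
  unfold bit
  rw [h, add_comm, Nat.add_mul_div_left _ _ (by positivity), Nat.add_mul_mod_self_left]

theorem bit_two_pow_mul_add_self {m b u : ℕ} (hb : b < 2) (hu : u < 2 ^ m) :
    bit (2 ^ m * b + u) m = b := by
  unfold bit
  rw [add_comm, Nat.add_mul_div_left _ _ (by positivity), Nat.div_eq_of_lt hu, zero_add,
    Nat.mod_eq_of_lt hb]

theorem Lline_succ_two_pow_mul_add {m b u : ℕ} (s : ℕ) (hb : b < 2) (hu : u < 2 ^ m) :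
    Lline (m + 1) s (2 ^ m * b + u) = b * ((s + 1) / 2) + Lline m (s / 2) u := by
  unfold Lline
  rw [dline_succ, bit_two_pow_mul_add_self hb hu,
    dline_congr fun i hi => bit_two_pow_mul_add_of_lt b u hi]

theorem sum_range_two_pow_succ {M : Type*} [AddCommMonoid M] (m : ℕ) (g : ℕ → M) :
    ∑ u ∈ range (2 ^ (m + 1)), g u = ∑ b ∈ range 2, ∑ u ∈ range (2 ^ m), g (2 ^ m * b + u) := by
  simp [sum_range_succ, pow_succ, mul_two, sum_range_add]

/-- The partial transform `f^m(s₁, v₁, s₂, v₂, d)`, with slopes and block indices in decimal. -/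
def planeSum (f : ℤ → ℤ → ℤ → ℤ) (m s₁ v₁ s₂ v₂ : ℕ) (d : ℤ) : ℤ :=
  ∑ u₁ ∈ range (2 ^ m), ∑ u₂ ∈ range (2 ^ m),
    f (2 ^ m * v₁ + u₁ : ℕ) (2 ^ m * v₂ + u₂ : ℕ) (Lline m s₁ u₁ + Lline m s₂ u₂ + d)

theorem planeSum_succ_eq_sum_blocks (f : ℤ → ℤ → ℤ → ℤ) (m s₁ v₁ s₂ v₂ : ℕ) (d : ℤ) :
    planeSum f (m + 1) s₁ v₁ s₂ v₂ d =
      ∑ b₁ ∈ range 2, ∑ b₂ ∈ range 2, planeSum f m (s₁ / 2) (2 * v₁ + b₁) (s₂ / 2) (2 * v₂ + b₂)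
        (d + (b₁ * ((s₁ + 1) / 2) : ℕ) + (b₂ * ((s₂ + 1) / 2) : ℕ)) := by
  unfold planeSum
  simp_rw [sum_range_two_pow_succ m, sum_comm (s := range (2 ^ m)) (t := range 2)]
  refine sum_congr rfl fun b₁ hb₁ => sum_congr rfl fun b₂ hb₂ =>
    sum_congr rfl fun u₁ hu₁ => sum_congr rfl fun u₂ hu₂ => ?_
  simp only [mem_range] at hb₁ hb₂ hu₁ hu₂
  rw [Lline_succ_two_pow_mul_add s₁ hb₁ hu₁, Lline_succ_two_pow_mul_add s₂ hb₂ hu₂]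
  congr 1 <;> push_cast <;> ring

theorem planeSum_succ (f : ℤ → ℤ → ℤ → ℤ) (m s₁ v₁ s₂ v₂ : ℕ) (d : ℤ) :
    planeSum f (m + 1) s₁ v₁ s₂ v₂ d =
      planeSum f m (s₁ / 2) (2 * v₁) (s₂ / 2) (2 * v₂) d +
      planeSum f m (s₁ / 2) (2 * v₁ + 1) (s₂ / 2) (2 * v₂)
        (d + (s₁ % 2 : ℤ) + (s₁ / 2 : ℤ)) +
      planeSum f m (s₁ / 2) (2 * v₁) (s₂ / 2) (2 * v₂ + 1)
        (d + (s₂ % 2 : ℤ) + (s₂ / 2 : ℤ)) +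
      planeSum f m (s₁ / 2) (2 * v₁ + 1) (s₂ / 2) (2 * v₂ + 1)
        (d + (s₁ % 2 : ℤ) + (s₁ / 2 : ℤ) + (s₂ % 2 : ℤ) + (s₂ / 2 : ℤ)) := by
  have half_up (s : ℕ) : (s % 2 + s / 2 : ℤ) = ((s + 1) / 2 : ℕ) := by omega
  rw [planeSum_succ_eq_sum_blocks]
  simp only [sum_range_succ, sum_range_zero, zero_add, one_mul, zero_mul, Nat.cast_zero,
    add_zero, add_assoc, half_up]
  ring

theorem drt3Stage_eq_planeSum (f : ℤ → ℤ → ℤ → ℤ) (m s₁ v₁ s₂ v₂ : ℕ) (d : ℤ) :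
    drt3Stage f m s₁ v₁ s₂ v₂ d = planeSum f m s₁ v₁ s₂ v₂ d := by
  induction m generalizing s₁ v₁ s₂ v₂ d with
  | zero => simp [drt3Stage, planeSum, Lline, dline]
  | succ m ih => simp only [drt3Stage, planeSum_succ, ih]

theorem drt3_final_stage_general (n : ℕ) (f : ℤ → ℤ → ℤ → ℤ)
    (s₁ : ℕ) (s₂ : ℕ) (d : ℤ) :
    drt3Stage f n s₁ 0 s₂ 0 d =
      ∑ x ∈ Finset.range (2 ^ n), ∑ y ∈ Finset.range (2 ^ n),
        f (x : ℤ) (y : ℤ) ((Lline n s₁ x : ℤ) + (Lline n s₂ y : ℤ) + d) := by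
  simp [drt3Stage_eq_planeSum, planeSum]

theorem drt3_final_stage (n : ℕ) (f : ℤ → ℤ → ℤ → ℤ)
    (hf : ∀ x y z : ℤ,
      x < 0 ∨ (2 : ℤ) ^ n ≤ x ∨ y < 0 ∨ (2 : ℤ) ^ n ≤ y ∨ z < 0 ∨ (2 : ℤ) ^ n ≤ z →
      f x y z = 0)
    (s₁ : ℕ) (hs₁ : s₁ < 2 ^ n) (s₂ : ℕ) (hs₂ : s₂ < 2 ^ n) (d : ℤ) :
    drt3Stage f n s₁ 0 s₂ 0 d =
      ∑ x ∈ Finset.range (2 ^ n), ∑ y ∈ Finset.range (2 ^ n),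
        f (x : ℤ) (y : ℤ) ((Lline n s₁ x : ℤ) + (Lline n s₂ y : ℤ) + d) :=
  drt3_final_stage_general n f s₁ s₂ d
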